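/- arXiv:2404.05868 — 2 statements merged into one kernel-verified Lean document; each statement's English description precedes it below -/
import Mathlib

section
/- Let β, η > 0 with η·C_b·β ≤ 1 for some constant C_b ≥ C_a > 0, and consider a sequence b^{(0)} = 0, b^{(t+1)} = b^{(t)} - η·w_t where C_a·exp(β·b^{(t)}) ≤ w_t ≤ C_b·exp(β·b^{(t)}) for all t. Suppose b satisfies the comparison with the ODE solutions: then b^{(t)} ≥ -(1/β)·log(β·C_b·(1+exp(η·C_b))·η·t + 1) for all t ≥ 0. -/
/-!
With `y t = exp (-(β * b t))` the recursion reads `y (t + 1) = y t * exp (β * η * w t)`, and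
`β * η * w t * y t ≤ β * η * Cb ≤ 1`. Since `b` decreases from `0`, the exponent `β * η * w t` lies
in `[0, 1]`, where `exp x ≤ 1 + (e - 1) * x` by convexity. Hence `y` grows by at most
`(e - 1) * β * η * Cb` per step, i.e. at most linearly, and `b t = -(log (y t)) / β` decreases
at most logarithmically.
-/

open Real

lemma exp_le_one_add_exp_one_sub_one_mul {x : ℝ} (h0 : 0 ≤ x) (h1 : x ≤ 1) :
    exp x ≤ 1 + (exp 1 - 1) * x := by
  have h := convexOn_exp.2 (Set.mem_univ 0) (Set.mem_univ 1) (sub_nonneg.2 h1) h0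
    (sub_add_cancel 1 x)
  simp only [smul_eq_mul, mul_zero, mul_one, zero_add, exp_zero] at h
  linarith

lemma le_add_mul_of_le_add {y : ℕ → ℝ} {c : ℝ} (h : ∀ t, y (t + 1) ≤ y t + c) (t : ℕ) :
    y t ≤ y 0 + c * t := by
  induction t with
  | zero => simp
  | succ t ih => push_cast; linarith [h t]

lemma exp_neg_sub_le {u s K : ℝ} (hu : u ≤ 0) (hs : 0 ≤ s) (hsK : s * exp (-u) ≤ K)
    (hK : K ≤ 1) : exp (-(u - s)) ≤ exp (-u) + (exp 1 - 1) * K := by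
  have hs1 : s ≤ 1 :=
    calc s ≤ s * exp (-u) := le_mul_of_one_le_right hs (one_le_exp (by linarith))
      _ ≤ 1 := hsK.trans hK
  have he : 0 ≤ exp 1 - 1 := sub_nonneg.2 (one_le_exp zero_le_one)
  calc exp (-(u - s)) = exp (-u) * exp s := by rw [← exp_add]; ring_nf
    _ ≤ exp (-u) * (1 + (exp 1 - 1) * s) := by
        gcongr; exact exp_le_one_add_exp_one_sub_one_mul hs hs1
    _ = exp (-u) + (exp 1 - 1) * (s * exp (-u)) := by ring
    _ ≤ exp (-u) + (exp 1 - 1) * K := by gcongr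

lemma neg_one_div_mul_log_le_of_exp_neg_mul_le {β x A : ℝ} (hβ : 0 < β)
    (h : exp (-(β * x)) ≤ A) : -(1 / β) * log A ≤ x := by
  have hlog : -(β * x) ≤ log A := (le_log_iff_exp_le ((exp_pos _).trans_le h)).2 h
  rw [neg_mul, one_div_mul_eq_div, neg_le, le_div_iff₀ hβ]
  linarith

section Recursion

variable {β η Cb : ℝ} {w b : ℕ → ℝ}

lemma nonpos_of_step_eq_sub (hη : 0 ≤ η) (hw : ∀ t, 0 ≤ w t) (hb0 : b 0 = 0)
    (hb : ∀ t, b (t + 1) = b t - η * w t) (t : ℕ) : b t ≤ 0 :=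
  hb0 ▸ antitone_nat_of_succ_le (fun t => by rw [hb]; nlinarith [hw t]) (Nat.zero_le t)

lemma exp_neg_mul_le_one_add_mul (hβ : 0 ≤ β) (hη : 0 ≤ η) (hstep : η * Cb * β ≤ 1)
    (hw : ∀ t, 0 ≤ w t ∧ w t ≤ Cb * exp (β * b t)) (hb0 : b 0 = 0)
    (hb : ∀ t, b (t + 1) = b t - η * w t) (t : ℕ) :
    exp (-(β * b t)) ≤ 1 + (exp 1 - 1) * (β * η * Cb) * t := by
  have hb_nonpos := nonpos_of_step_eq_sub hη (fun t => (hw t).1) hb0 hb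
  have step (t : ℕ) :
      exp (-(β * b (t + 1))) ≤ exp (-(β * b t)) + (exp 1 - 1) * (β * η * Cb) := by
    have hsK : β * η * w t * exp (-(β * b t)) ≤ β * η * Cb :=
      calc β * η * w t * exp (-(β * b t))
          ≤ β * η * (Cb * exp (β * b t)) * exp (-(β * b t)) := by gcongr; exact (hw t).2
        _ = β * η * Cb := by rw [mul_assoc, mul_assoc Cb, ← exp_add]; simp
    have h := exp_neg_sub_le (mul_nonpos_of_nonneg_of_nonpos hβ (hb_nonpos t))
      (by have := (hw t).1; positivity) hsK (by linarith)
    rwa [hb, mul_sub, ← mul_assoc]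
  simpa [hb0] using le_add_mul_of_le_add (y := fun t => exp (-(β * b t))) step t

end Recursion

theorem npo_log_lower_bound (β η Ca Cb : ℝ) (hβ : 0 < β) (hη : 0 < η)
    (hCa : 0 < Ca) (hCab : Ca ≤ Cb) (hstep : η * Cb * β ≤ 1)
    (w : ℕ → ℝ) (b : ℕ → ℝ) (hb0 : b 0 = 0)
    (hb : ∀ t, b (t + 1) = b t - η * w t)
    (hw : ∀ t, Ca * Real.exp (β * b t) ≤ w t ∧ w t ≤ Cb * Real.exp (β * b t)) :
    ∀ t : ℕ,
      b t ≥ -(1 / β) * Real.log (β * Cb * (1 + Real.exp (η * Cb)) * η * t + 1) := by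
  intro t
  have hCb : 0 ≤ Cb := hCa.le.trans hCab
  have hw' (t : ℕ) : 0 ≤ w t ∧ w t ≤ Cb * exp (β * b t) :=
    ⟨(by positivity : 0 ≤ Ca * exp (β * b t)).trans (hw t).1, (hw t).2⟩
  have hgrowth := exp_neg_mul_le_one_add_mul hβ.le hη.le hstep hw' hb0 hb t
  -- `e - 1 < 2 ≤ 1 + exp (η * Cb)`
  have he : exp 1 - 1 ≤ 1 + exp (η * Cb) := by
    linarith [exp_one_lt_d9, one_le_exp (by positivity : 0 ≤ η * Cb)]
  refine neg_one_div_mul_log_le_of_exp_neg_mul_le hβ (hgrowth.trans ?_)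
  have : 0 ≤ β * η * Cb * t := by positivity
  nlinarith
end

section
/- Let b : [0, ∞) → ℝ be differentiable with b(0) = 0 and suppose b'(t) ≤ -c·exp(β·b(t)) for all t ≥ 0, with constants c, β > 0. Then b(t) ≤ -(1/β)·log(β·c·t + 1) for all t ≥ 0. -/
/-!
The substitution `u = exp (-β b)` linearizes the differential inequality: it turns
`b' ≤ -c exp (β b)` into `u' ≥ β c`, so `u t ≥ u 0 + β c t = 1 + β c t` by the mean value
theorem, and taking logarithms gives the bound.
-/

open Real Set

lemma hasDerivAt_exp_neg_mul {b : ℝ → ℝ} {b' β t : ℝ} (hb : HasDerivAt b b' t) :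
    HasDerivAt (fun s => exp (-(β * b s))) (exp (-(β * b t)) * -(β * b')) t :=
  ((hb.const_mul β).neg).exp

lemma mul_le_exp_neg_mul_mul_neg {c β x x' : ℝ} (hβ : 0 ≤ β)
    (hx' : x' ≤ -c * exp (β * x)) : β * c ≤ exp (-(β * x)) * -(β * x') :=
  calc β * c = β * (c * exp (β * x) * exp (-(β * x))) := by
        rw [mul_assoc, ← exp_add, add_neg_cancel, exp_zero, mul_one]
    _ ≤ β * (-x' * exp (-(β * x))) := by gcongr; linarith
    _ = exp (-(β * x)) * -(β * x') := by ring

theorem exp_neg_mul_add_mul_sub_le_of_deriv_le {c β a : ℝ} (hβ : 0 ≤ β) {b b' : ℝ → ℝ}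
    (hderiv : ∀ t ≥ a, HasDerivAt b (b' t) t)
    (hle : ∀ t ≥ a, b' t ≤ -c * exp (β * b t)) {t : ℝ} (ht : a ≤ t) :
    exp (-(β * b a)) + β * c * (t - a) ≤ exp (-(β * b t)) := by
  have hu : ∀ s ∈ Ici a, HasDerivAt (fun s => exp (-(β * b s)))
      (exp (-(β * b s)) * -(β * b' s)) s :=
    fun s hs => hasDerivAt_exp_neg_mul (hderiv s hs)
  have hgrowth := (convex_Ici a).mul_sub_le_image_sub_of_le_deriv
    (fun s hs => (hu s hs).continuousAt.continuousWithinAt)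
    (fun s hs => (hu s (interior_subset hs)).differentiableAt.differentiableWithinAt)
    (fun s hs => (hu s (interior_subset hs)).deriv ▸
      mul_le_exp_neg_mul_mul_neg hβ (hle s (interior_subset hs)))
    a self_mem_Ici t ht ht
  linarith

lemma le_neg_one_div_mul_log_of_le_exp_neg_mul {β x y : ℝ} (hβ : 0 < β) (hx : 0 < x)
    (h : x ≤ exp (-(β * y))) : y ≤ -(1 / β) * log x := by
  have hlog : log x ≤ -(β * y) := (log_le_iff_le_exp hx).2 h
  rw [neg_mul, one_div, ← div_eq_inv_mul, le_neg, div_le_iff₀ hβ]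
  linarith

theorem ode_comparison_upper (c β : ℝ) (hc : 0 < c) (hβ : 0 < β)
    (b b' : ℝ → ℝ) (hb0 : b 0 = 0)
    (hderiv : ∀ t ≥ (0 : ℝ), HasDerivAt b (b' t) t)
    (hle : ∀ t ≥ (0 : ℝ), b' t ≤ -c * Real.exp (β * b t)) :
    ∀ t ≥ (0 : ℝ), b t ≤ -(1 / β) * Real.log (β * c * t + 1) := by
  intro t ht
  have hgrowth := exp_neg_mul_add_mul_sub_le_of_deriv_le hβ.le hderiv hle ht
  rw [hb0, mul_zero, neg_zero, exp_zero, sub_zero] at hgrowth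
  exact le_neg_one_div_mul_log_of_le_exp_neg_mul hβ (by positivity) (by linarith)
end
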